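/- arXiv:2301.02662 — 11 statements merged into one kernel-verified Lean document; each statement's English description precedes it below -/
import Mathlib

section
/- For a random variable D with support in [a,b], mean μ ∈ (a,b), and mean absolute deviation δ = E|D−μ|, the three-point distribution placing probability δ/(2(μ−a)) at a, probability 1 − δ/(2(μ−a)) − δ/(2(b−μ)) at μ, and probability δ/(2(b−μ)) at b is a valid probability distribution (all masses nonnegative and summing to 1) with mean μ and mean absolute deviation δ. -/
open MeasureTheory

lemma tri_integral (f : ℝ → ℝ) (hf : Measurable f) (a m b : ℝ) (p q r : ℝ)
    (hp : 0 ≤ p) (hq : 0 ≤ q) (hr : 0 ≤ r) :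
    ∫ x, f x ∂(ENNReal.ofReal p • Measure.dirac a + ENNReal.ofReal q • Measure.dirac m +
      ENNReal.ofReal r • Measure.dirac b) = p * f a + q * f m + r * f b := by
  have hint : ∀ (c : ℝ) (x : ℝ), Integrable f (ENNReal.ofReal c • Measure.dirac x) :=
    fun c x => ((integrable_const (f x)).congr (ae_eq_dirac' hf).symm).smul_measure
      ENNReal.ofReal_ne_top
  rw [integral_add_measure ((hint p a).add_measure (hint q m)) (hint r b),
    integral_add_measure (hint p a) (hint q m),
    integral_smul_measure, integral_smul_measure, integral_smul_measure,
    integral_dirac' _ _ hf.stronglyMeasurable, integral_dirac' _ _ hf.stronglyMeasurable,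
    integral_dirac' _ _ hf.stronglyMeasurable]
  simp [smul_eq_mul, ENNReal.toReal_ofReal, hp, hq, hr]

/-- The mean-MAD three-point worst-case distribution is a valid probability
distribution with mean `μ` and mean absolute deviation `δ`. -/
theorem stmt_0 (a μ b δ : ℝ) (ha : 0 ≤ a) (haμ : a < μ) (hμb : μ < b)
    (hδ : 0 ≤ δ) (hδub : δ ≤ 2 * (b - μ) * (μ - a) / (b - a)) :
    0 ≤ δ / (2 * (μ - a)) ∧
    0 ≤ 1 - δ / (2 * (μ - a)) - δ / (2 * (b - μ)) ∧
    0 ≤ δ / (2 * (b - μ)) ∧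
    (IsProbabilityMeasure
      (ENNReal.ofReal (δ / (2 * (μ - a))) • Measure.dirac a +
        ENNReal.ofReal (1 - δ / (2 * (μ - a)) - δ / (2 * (b - μ))) • Measure.dirac μ +
        ENNReal.ofReal (δ / (2 * (b - μ))) • Measure.dirac b)) ∧
    (∫ x, x ∂(ENNReal.ofReal (δ / (2 * (μ - a))) • Measure.dirac a +
        ENNReal.ofReal (1 - δ / (2 * (μ - a)) - δ / (2 * (b - μ))) • Measure.dirac μ +
        ENNReal.ofReal (δ / (2 * (b - μ))) • Measure.dirac b) = μ) ∧
    (∫ x, |x - μ| ∂(ENNReal.ofReal (δ / (2 * (μ - a))) • Measure.dirac a +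
        ENNReal.ofReal (1 - δ / (2 * (μ - a)) - δ / (2 * (b - μ))) • Measure.dirac μ +
        ENNReal.ofReal (δ / (2 * (b - μ))) • Measure.dirac b) = δ) := by
  have hX : (0:ℝ) < μ - a := by linarith
  have hY : (0:ℝ) < b - μ := by linarith
  have hba : (0:ℝ) < b - a := by linarith
  have hp1 : 0 ≤ δ / (2 * (μ - a)) := by positivity
  have hp3 : 0 ≤ δ / (2 * (b - μ)) := by positivity
  have hδub' : δ * (b - a) ≤ 2 * (b - μ) * (μ - a) := by
    rwa [le_div_iff₀ hba] at hδub
  have hp2 : 0 ≤ 1 - δ / (2 * (μ - a)) - δ / (2 * (b - μ)) := by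
    rw [sub_sub, sub_nonneg, div_add_div _ _ (by positivity) (by positivity),
      div_le_one (by positivity)]
    nlinarith
  have hsum : δ / (2 * (μ - a)) + (1 - δ / (2 * (μ - a)) - δ / (2 * (b - μ)))
      + δ / (2 * (b - μ)) = 1 := by ring
  refine ⟨hp1, hp2, hp3, ?_, ?_, ?_⟩
  · constructor
    simp only [Measure.add_apply, Measure.smul_apply, Measure.dirac_apply' _ MeasurableSet.univ,
      Set.indicator_univ, Pi.one_apply, smul_eq_mul, mul_one]
    rw [← ENNReal.ofReal_add hp1 hp2, ← ENNReal.ofReal_add (by linarith) hp3, hsum,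
      ENNReal.ofReal_one]
  · rw [tri_integral (fun x => x) measurable_id a μ b _ _ _ hp1 hp2 hp3]
    field_simp
    ring
  · rw [tri_integral (fun x => |x - μ|) ((measurable_id.sub measurable_const).abs) a μ b _ _ _ hp1 hp2 hp3]
    rw [abs_of_nonpos (show a - μ ≤ 0 by linarith), abs_of_nonneg (show (0:ℝ) ≤ b - μ by linarith)]
    field_simp
    simp only [sub_self, mul_zero, abs_zero]
    ring
end

section
/- For any probability distribution P of a random variable D supported on [a,b] with mean μ and mean absolute deviation δ, and for any q ∈ ℝ, the expectation E_P[(D−q)^+] is at most p_a·(a−q)^+ + p_μ·(μ−q)^+ + p_b·(b−q)^+, where p_a = δ/(2(μ−a)), p_μ = 1 − δ/(2(μ−a)) − δ/(2(b−μ)), p_b = δ/(2(b−μ)). -/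
open MeasureTheory

/-- Chord inequality for the convex function `x ↦ max (x - q) 0`. -/
lemma chord_aux (u v x q : ℝ) (hu : u ≤ x) (hv : x ≤ v) :
    (v - u) * max (x - q) 0 ≤ (v - x) * max (u - q) 0 + (x - u) * max (v - q) 0 := by
  have h1 : u - q ≤ max (u - q) 0 := le_max_left _ _
  have h1' : (0:ℝ) ≤ max (u - q) 0 := le_max_right _ _
  have h2 : v - q ≤ max (v - q) 0 := le_max_left _ _
  have h2' : (0:ℝ) ≤ max (v - q) 0 := le_max_right _ _
  rcases le_total (x - q) 0 with h | h
  · rw [max_eq_right h]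
    nlinarith [mul_nonneg (sub_nonneg.2 hu) h2', mul_nonneg (sub_nonneg.2 hv) h1']
  · rw [max_eq_left h]
    nlinarith [mul_le_mul_of_nonneg_left h1 (sub_nonneg.2 hv),
      mul_le_mul_of_nonneg_left h2 (sub_nonneg.2 hu)]

/-- Ben-Tal–Hochman upper bound for `E[(D - q)^+]` under mean-MAD-range information. -/
theorem stmt_1 (a μ b δ : ℝ) (ha : 0 ≤ a) (haμ : a < μ) (hμb : μ < b) (hδ : 0 < δ)
    (hδub : δ ≤ 2 * (b - μ) * (μ - a) / (b - a))
    (P : Measure ℝ) [IsProbabilityMeasure P]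
    (hsupp : ∀ᵐ x ∂P, x ∈ Set.Icc a b)
    (hmean : ∫ x, x ∂P = μ)
    (hmad : ∫ x, |x - μ| ∂P = δ)
    (q : ℝ) :
    ∫ x, max (x - q) 0 ∂P ≤
      (δ / (2 * (μ - a))) * max (a - q) 0 +
      (1 - δ / (2 * (μ - a)) - δ / (2 * (b - μ))) * max (μ - q) 0 +
      (δ / (2 * (b - μ))) * max (b - q) 0 := by
  have hμa : (0:ℝ) < μ - a := by linarith
  have hbμ : (0:ℝ) < b - μ := by linarith
  set fa := max (a - q) 0 with hfa
  set fm := max (μ - q) 0 with hfm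
  set fb := max (b - q) 0 with hfb
  set c1 : ℝ := ((fm - fa) / (μ - a) + (fb - fm) / (b - μ)) / 2 with hc1
  set c2 : ℝ := ((fb - fm) / (b - μ) - (fm - fa) / (μ - a)) / 2 with hc2
  -- pointwise majorization
  have hpt : ∀ x ∈ Set.Icc a b, max (x - q) 0 ≤ fm + c1 * (x - μ) + c2 * |x - μ| := by
    intro x hx
    rcases le_total x μ with hxμ | hxμ
    · have habs : |x - μ| = μ - x := by rw [abs_of_nonpos (by linarith)]; ring
      have hform : fm + c1 * (x - μ) + c2 * (μ - x)
          = fm + ((fm - fa) / (μ - a)) * (x - μ) := by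
        rw [hc1, hc2]; ring
      rw [habs, hform]
      have h := chord_aux a μ x q hx.1 hxμ
      have heq : (μ - a) * (fm + (fm - fa) / (μ - a) * (x - μ))
          = (μ - x) * fa + (x - a) * fm := by
        field_simp; ring
      have : (μ - a) * max (x - q) 0 ≤ (μ - a) * (fm + (fm - fa) / (μ - a) * (x - μ)) := by
        rw [heq]; exact h
      exact le_of_mul_le_mul_left this hμa
    · have habs : |x - μ| = x - μ := abs_of_nonneg (by linarith)
      have hform : fm + c1 * (x - μ) + c2 * (x - μ)
          = fm + ((fb - fm) / (b - μ)) * (x - μ) := by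
        rw [hc1, hc2]; ring
      rw [habs, hform]
      have h := chord_aux μ b x q hxμ hx.2
      have heq : (b - μ) * (fm + (fb - fm) / (b - μ) * (x - μ))
          = (b - x) * fm + (x - μ) * fb := by
        field_simp; ring
      have : (b - μ) * max (x - q) 0 ≤ (b - μ) * (fm + (fb - fm) / (b - μ) * (x - μ)) := by
        rw [heq]; exact h
      exact le_of_mul_le_mul_left this hbμ
  -- integrability
  have hmf : AEStronglyMeasurable (fun x => max (x - q) 0) P :=
    ((continuous_id.sub continuous_const).max continuous_const).aestronglyMeasurable
  have hint_f : Integrable (fun x => max (x - q) 0) P := by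
    refine (integrable_const (|b - q|)).mono' hmf ?_
    filter_upwards [hsupp] with x hx
    rw [Real.norm_eq_abs, abs_of_nonneg (le_max_right _ _)]
    exact le_trans (max_le_max (by linarith [hx.2]) le_rfl)
      (max_le (le_abs_self _) (abs_nonneg _))
  have hint_id : Integrable (fun x : ℝ => x) P := by
    refine (integrable_const (|a| + |b|)).mono' aestronglyMeasurable_id ?_
    filter_upwards [hsupp] with x hx
    rw [Real.norm_eq_abs, abs_le]
    constructor
    · linarith [hx.1, neg_abs_le a, abs_nonneg b]
    · linarith [hx.2, le_abs_self b, abs_nonneg a]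
  have hint_sub : Integrable (fun x : ℝ => x - μ) P := hint_id.sub (integrable_const μ)
  have hint_abs : Integrable (fun x : ℝ => |x - μ|) P := hint_sub.abs
  have hint_g : Integrable (fun x => fm + c1 * (x - μ) + c2 * |x - μ|) P :=
    ((integrable_const fm).add (hint_sub.const_mul c1)).add (hint_abs.const_mul c2)
  have hle : ∫ x, max (x - q) 0 ∂P ≤ ∫ x, (fm + c1 * (x - μ) + c2 * |x - μ|) ∂P := by
    refine integral_mono_ae hint_f hint_g ?_
    filter_upwards [hsupp] with x hx
    exact hpt x hx
  have hgval : ∫ x, (fm + c1 * (x - μ) + c2 * |x - μ|) ∂P = fm + c2 * δ := by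
    have h1 : ∫ x, (fm + c1 * (x - μ) + c2 * |x - μ|) ∂P
        = (∫ x, (fm + c1 * (x - μ)) ∂P) + ∫ x, c2 * |x - μ| ∂P :=
      integral_add ((integrable_const fm).add (hint_sub.const_mul c1))
        (hint_abs.const_mul c2)
    have h2 : ∫ x, (fm + c1 * (x - μ)) ∂P
        = (∫ _x, fm ∂P) + ∫ x, c1 * (x - μ) ∂P :=
      integral_add (integrable_const fm) (hint_sub.const_mul c1)
    have h3 : ∫ x, c1 * (x - μ) ∂P = c1 * ∫ x, (x - μ) ∂P := integral_const_mul _ _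
    have h4 : ∫ x, (x - μ) ∂P = (∫ x, x ∂P) - ∫ _x, μ ∂P :=
      integral_sub hint_id (integrable_const μ)
    have h5 : ∫ x, c2 * |x - μ| ∂P = c2 * ∫ x, |x - μ| ∂P := integral_const_mul _ _
    rw [h1, h2, h3, h4, h5, hmean, hmad, integral_const, integral_const]
    simp
  have hfinal : fm + c2 * δ =
      (δ / (2 * (μ - a))) * fa + (1 - δ / (2 * (μ - a)) - δ / (2 * (b - μ))) * fm +
        (δ / (2 * (b - μ))) * fb := by
    rw [hc2]; field_simp; ring
  calc ∫ x, max (x - q) 0 ∂P ≤ ∫ x, (fm + c1 * (x - μ) + c2 * |x - μ|) ∂P := hle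
    _ = fm + c2 * δ := hgval
    _ = _ := hfinal
end

section
/- There exist λ₀, λ₁, λ₂ ∈ ℝ such that the function M(x) = λ₀ + λ₁x + λ₂|x−μ| satisfies M(x) ≥ f(x) for all x ∈ [a,b] and M(a) = f(a), M(μ) = f(μ), M(b) = f(b), for any convex function f on [a,b]. -/
lemma chord_bound {a b : ℝ} {f : ℝ → ℝ} (hf : ConvexOn ℝ (Set.Icc a b) f)
    {u v x : ℝ} (hu : u ∈ Set.Icc a b) (hv : v ∈ Set.Icc a b) (huv : u < v)
    (hx1 : u ≤ x) (hx2 : x ≤ v) :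
    f x ≤ f u + (f v - f u) / (v - u) * (x - u) := by
  have hvu : (0:ℝ) < v - u := by linarith
  set t : ℝ := (x - u) / (v - u) with ht
  have ht0 : 0 ≤ t := div_nonneg (by linarith) hvu.le
  have ht1 : t ≤ 1 := by rw [ht, div_le_one hvu]; linarith
  have hx' : x = (1 - t) * u + t * v := by rw [ht]; field_simp [hvu.ne']; ring
  have h := hf.2 hu hv (by linarith : (0:ℝ) ≤ 1 - t) ht0 (by ring)
  simp only [smul_eq_mul] at h
  rw [← hx'] at h
  calc f x ≤ (1 - t) * f u + t * f v := h
    _ = f u + (f v - f u) / (v - u) * (x - u) := by rw [ht]; field_simp; ring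

/-- The dual majorant: for convex `f` on `[a,b]` there exist multipliers such that
`M(x) = λ₀ + λ₁ x + λ₂ |x - μ|` majorizes `f` on `[a,b]` and touches it at `a`, `μ`, `b`. -/
theorem stmt_2 (a μ b : ℝ) (haμ : a < μ) (hμb : μ < b)
    (f : ℝ → ℝ) (hf : ConvexOn ℝ (Set.Icc a b) f) :
    ∃ l0 l1 l2 : ℝ,
      (∀ x ∈ Set.Icc a b, f x ≤ l0 + l1 * x + l2 * |x - μ|) ∧
      l0 + l1 * a + l2 * |a - μ| = f a ∧
      l0 + l1 * μ + l2 * |μ - μ| = f μ ∧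
      l0 + l1 * b + l2 * |b - μ| = f b := by
  have haμ' : (0:ℝ) < μ - a := by linarith
  have hμb' : (0:ℝ) < b - μ := by linarith
  obtain ⟨s1, hs1⟩ : ∃ s1 : ℝ, s1 = (f μ - f a) / (μ - a) := ⟨_, rfl⟩
  obtain ⟨s2, hs2⟩ : ∃ s2 : ℝ, s2 = (f b - f μ) / (b - μ) := ⟨_, rfl⟩
  have h1 : f μ = f a + s1 * (μ - a) := by rw [hs1]; field_simp; ring
  have h2 : f b = f μ + s2 * (b - μ) := by rw [hs2]; field_simp; ring
  refine ⟨f μ - (s1 + s2) / 2 * μ, (s1 + s2) / 2, (s2 - s1) / 2, ?_, ?_, ?_, ?_⟩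
  · intro x hx
    obtain ⟨hax, hxb⟩ := hx
    have ha : a ∈ Set.Icc a b := ⟨le_refl _, by linarith⟩
    have hμm : μ ∈ Set.Icc a b := ⟨by linarith, by linarith⟩
    have hb : b ∈ Set.Icc a b := ⟨by linarith, le_refl _⟩
    rcases le_total x μ with h | h
    · have hc := chord_bound hf ha hμm haμ hax h
      rw [← hs1] at hc
      rw [abs_of_nonpos (by linarith)]
      have e : f μ - (s1 + s2) / 2 * μ + (s1 + s2) / 2 * x + (s2 - s1) / 2 * -(x - μ)
          = f a + s1 * (x - a) := by rw [h1]; ring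
      exact hc.trans e.ge
    · have hc := chord_bound hf hμm hb hμb h hxb
      rw [← hs2] at hc
      rw [abs_of_nonneg (by linarith)]
      have e : f μ - (s1 + s2) / 2 * μ + (s1 + s2) / 2 * x + (s2 - s1) / 2 * (x - μ)
          = f μ + s2 * (x - μ) := by ring
      exact hc.trans e.ge
  · rw [abs_of_nonpos (by linarith), h1]; ring
  · simp
  · rw [abs_of_nonneg (by linarith), h2]; ring
end

section
/- For any probability distribution P of a random variable D supported on [a,b] with mean μ, mean absolute deviation δ, and β := P(D ≥ μ) ∈ (0,1), and for any convex function f, the expectation E_P[f(D)] is at least β·f(μ + δ/(2β)) + (1−β)·f(μ − δ/(2(1−β))). -/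
open MeasureTheory

lemma support_line (f : ℝ → ℝ) (hf : ConvexOn ℝ Set.univ f) (m : ℝ) :
    ∃ c : ℝ, ∀ x, f m + c * (x - m) ≤ f x := by
  set S : Set ℝ := (fun y => (f y - f m) / (y - m)) '' Set.Ioi m with hS
  have hne : S.Nonempty := ⟨_, ⟨m + 1, by simp, rfl⟩⟩
  have hbdd : BddBelow S := by
    refine ⟨(f (m - 1) - f m) / ((m - 1) - m), ?_⟩
    rintro _ ⟨y, hy, rfl⟩
    exact hf.secant_mono (Set.mem_univ m) (Set.mem_univ _) (Set.mem_univ _)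
      (by norm_num) (ne_of_gt (Set.mem_Ioi.mp hy)) (by linarith [Set.mem_Ioi.mp hy])
  refine ⟨sInf S, fun x => ?_⟩
  rcases lt_trichotomy x m with hx | rfl | hx
  · have hle : (f x - f m) / (x - m) ≤ sInf S := by
      refine le_csInf hne ?_
      rintro _ ⟨y, hy, rfl⟩
      exact hf.secant_mono (Set.mem_univ m) (Set.mem_univ _) (Set.mem_univ _)
        (ne_of_lt hx) (ne_of_gt (Set.mem_Ioi.mp hy)) (by linarith [Set.mem_Ioi.mp hy])
    have := (div_le_iff_of_neg (by linarith : x - m < 0)).mp hle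
    linarith
  · simp
  · have hle : sInf S ≤ (f x - f m) / (x - m) := csInf_le hbdd ⟨x, hx, rfl⟩
    have := (le_div_iff₀ (by linarith : 0 < x - m)).mp hle
    linarith

/-- Ben-Tal–Hochman tight lower bound for `E[f(D)]` with convex `f`, given mean, MAD
and the probability `β = P(D ≥ μ)`. -/
theorem stmt_3 (a μ b δ β : ℝ) (haμ : a < μ) (hμb : μ < b) (hδ : 0 < δ)
    (hβ0 : 0 < β) (hβ1 : β < 1)
    (P : Measure ℝ) [IsProbabilityMeasure P]
    (hsupp : ∀ᵐ x ∂P, x ∈ Set.Icc a b)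
    (hmean : ∫ x, x ∂P = μ)
    (hmad : ∫ x, |x - μ| ∂P = δ)
    (hbeta : (P {x | μ ≤ x}).toReal = β)
    (f : ℝ → ℝ) (hf : ConvexOn ℝ Set.univ f) :
    β * f (μ + δ / (2 * β)) + (1 - β) * f (μ - δ / (2 * (1 - β))) ≤ ∫ x, f x ∂P := by
  have hcont : Continuous f := continuousOn_univ.mp (ConvexOn.continuousOn isOpen_univ hf)
  -- integrability
  obtain ⟨M, hM⟩ := (isCompact_Icc (a := a) (b := b)).exists_bound_of_continuousOn
    hcont.continuousOn
  have hif : Integrable f P :=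
    (integrable_const M).mono' hcont.aestronglyMeasurable
      (hsupp.mono fun x hx => hM x hx)
  have hix : Integrable (fun x => x) P := by
    refine (integrable_const (|a| + |b|)).mono' aestronglyMeasurable_id
      (hsupp.mono fun x hx => ?_)
    rw [Real.norm_eq_abs]
    exact abs_le.mpr ⟨by linarith [neg_abs_le a, abs_nonneg b, hx.1],
      by linarith [le_abs_self b, abs_nonneg a, hx.2]⟩
  have hixμ : Integrable (fun x => x - μ) P := hix.sub (integrable_const μ)
  have hiabs : Integrable (fun x => |x - μ|) P := hixμ.abs
  -- the set A = {x | μ ≤ x}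
  set A : Set ℝ := {x | μ ≤ x} with hAdef
  have hA : MeasurableSet A := measurableSet_Ici
  have hPA : (P A).toReal = β := hbeta
  have hPAc : (P Aᶜ).toReal = 1 - β := by
    rw [measure_compl hA (measure_ne_top P A), measure_univ,
      ENNReal.toReal_sub_of_le prob_le_one ENNReal.one_ne_top, ENNReal.toReal_one, hPA]
  -- centered integrals over A and Aᶜ
  have hsub0 : ∫ x, (x - μ) ∂P = 0 := by
    rw [integral_sub hix (integrable_const μ), hmean, integral_const]; simp
  have hsum : (∫ x in A, (x - μ) ∂P) + ∫ x in Aᶜ, (x - μ) ∂P = 0 := by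
    rw [integral_add_compl hA hixμ, hsub0]
  have hsumabs : (∫ x in A, |x - μ| ∂P) + ∫ x in Aᶜ, |x - μ| ∂P = δ := by
    rw [integral_add_compl hA hiabs, hmad]
  have hAeq : ∫ x in A, (x - μ) ∂P = ∫ x in A, |x - μ| ∂P :=
    setIntegral_congr_fun hA (fun x hx => (abs_of_nonneg (sub_nonneg.2 hx)).symm)
  have hAceq : ∫ x in Aᶜ, (x - μ) ∂P = -∫ x in Aᶜ, |x - μ| ∂P := by
    rw [← integral_neg]
    refine setIntegral_congr_fun hA.compl (fun x hx => ?_)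
    have hxμ : x < μ := lt_of_not_ge hx
    rw [abs_of_nonpos (by linarith)]; ring
  have hIA : ∫ x in A, (x - μ) ∂P = δ / 2 := by linarith
  have hIAc : ∫ x in Aᶜ, (x - μ) ∂P = -(δ / 2) := by linarith
  -- key estimate on a measurable set via a supporting line
  have key : ∀ (s : Set ℝ), MeasurableSet s → ∀ (m c : ℝ),
      (∀ x, f m + c * (x - m) ≤ f x) →
      (P s).toReal * f m + c * ((∫ x in s, (x - μ) ∂P) + (P s).toReal * (μ - m))
        ≤ ∫ x in s, f x ∂P := by
    intro s hs m c hline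
    have hcm : Integrable (fun x : ℝ => c * (x - m)) P := by
      exact (hix.sub (integrable_const m)).const_mul c
    have hline_int : Integrable (fun x : ℝ => f m + c * (x - m)) P := by
      exact (integrable_const _).add hcm
    have h1 : ∫ x in s, (f m + c * (x - m)) ∂P ≤ ∫ x in s, f x ∂P :=
      setIntegral_mono_on hline_int.integrableOn hif.integrableOn hs (fun x _ => hline x)
    have h3 : ∫ x in s, (x - m) ∂P = (∫ x in s, (x - μ) ∂P) + (P s).toReal * (μ - m) := by
      have hxm : (fun x : ℝ => x - m) = fun x => (x - μ) + (μ - m) := by funext x; ring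
      rw [hxm, integral_add hixμ.integrableOn (integrable_const _).integrableOn,
        setIntegral_const, smul_eq_mul, measureReal_def]
    have h2 : ∫ x in s, (f m + c * (x - m)) ∂P
        = (P s).toReal * f m + c * ((∫ x in s, (x - μ) ∂P) + (P s).toReal * (μ - m)) := by
      rw [integral_add (integrable_const _).integrableOn hcm.integrableOn, setIntegral_const,
        integral_const_mul, h3, smul_eq_mul, measureReal_def]
    linarith
  obtain ⟨c1, hc1⟩ := support_line f hf (μ + δ / (2 * β))
  obtain ⟨c2, hc2⟩ := support_line f hf (μ - δ / (2 * (1 - β)))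
  have k1 := key A hA _ c1 hc1
  have k2 := key Aᶜ hA.compl _ c2 hc2
  rw [hPA, hIA] at k1
  rw [hPAc, hIAc] at k2
  have e1 : δ / 2 + β * (μ - (μ + δ / (2 * β))) = 0 := by
    field_simp
    ring
  have e2 : -(δ / 2) + (1 - β) * (μ - (μ - δ / (2 * (1 - β)))) = 0 := by
    have h1β : (1 : ℝ) - β ≠ 0 := by linarith
    field_simp
    ring
  rw [e1, mul_zero, add_zero] at k1
  rw [e2, mul_zero, add_zero] at k2
  have hsplit : (∫ x in A, f x ∂P) + ∫ x in Aᶜ, f x ∂P = ∫ x, f x ∂P :=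
    integral_add_compl hA hif
  linarith
end

section
/- For any random variable D supported on [a,b] with mean μ ∈ (a,b), the mean absolute deviation δ = E|D−μ| satisfies 0 ≤ δ ≤ 2(b−μ)(μ−a)/(b−a). -/
open MeasureTheory

/-- The MAD of a random variable supported on `[a,b]` with mean `μ` satisfies
`0 ≤ δ ≤ 2(b-μ)(μ-a)/(b-a)`. -/
theorem stmt_6 (a μ b : ℝ) (haμ : a < μ) (hμb : μ < b)
    (P : Measure ℝ) [IsProbabilityMeasure P]
    (hsupp : ∀ᵐ x ∂P, x ∈ Set.Icc a b)
    (hmean : ∫ x, x ∂P = μ) :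
    0 ≤ ∫ x, |x - μ| ∂P ∧ ∫ x, |x - μ| ∂P ≤ 2 * (b - μ) * (μ - a) / (b - a) := by
  have hba : (0:ℝ) < b - a := by linarith
  -- integrability of id
  have hid : Integrable (fun x : ℝ => x) P := by
    apply Integrable.mono' (integrable_const (max |a| |b|)) aestronglyMeasurable_id
    filter_upwards [hsupp] with x hx
    have h1 : |a| ≤ max |a| |b| := le_max_left _ _
    have h2 : |b| ≤ max |a| |b| := le_max_right _ _
    have h3 : -|a| ≤ a := neg_abs_le a
    have h4 : b ≤ |b| := le_abs_self b
    obtain ⟨hxa, hxb⟩ := hx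
    simp only [id_eq, Real.norm_eq_abs, abs_le]
    exact ⟨by linarith, by linarith⟩
  have hsub : Integrable (fun x : ℝ => x - μ) P := hid.sub (integrable_const μ)
  have habs : Integrable (fun x : ℝ => |x - μ|) P := hsub.abs
  have hpos : Integrable (fun x : ℝ => max (x - μ) 0) P := hsub.pos_part
  have hlin : Integrable (fun x : ℝ => ((b - μ) / (b - a)) * (x - a)) P :=
    (hid.sub (integrable_const a)).const_mul _
  -- mean of x - μ is 0
  have hzero : ∫ x, (x - μ) ∂P = 0 := by
    rw [integral_sub hid (integrable_const μ), hmean, integral_const]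
    simp
  -- |y| = 2 max y 0 - y
  have hdecomp : ∫ x, |x - μ| ∂P = 2 * ∫ x, max (x - μ) 0 ∂P := by
    have : (fun x : ℝ => |x - μ|) = fun x => 2 * max (x - μ) 0 - (x - μ) := by
      funext x
      rcases le_or_gt 0 (x - μ) with h | h
      · rw [abs_of_nonneg h, max_eq_left h]; ring
      · rw [abs_of_neg h, max_eq_right h.le]; ring
    rw [this, integral_sub (hpos.const_mul 2) hsub, hzero, integral_const_mul]
    ring
  have hnonneg : 0 ≤ ∫ x, |x - μ| ∂P := integral_nonneg fun x => abs_nonneg _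
  refine ⟨hnonneg, ?_⟩
  have hmono : ∫ x, max (x - μ) 0 ∂P ≤ ∫ x, ((b - μ) / (b - a)) * (x - a) ∂P := by
    refine integral_mono_ae hpos hlin ?_
    filter_upwards [hsupp] with x hx
    have hxa := hx.1
    have hxb := hx.2
    rcases le_or_gt (x - μ) 0 with h | h
    · rw [max_eq_right h]
      exact mul_nonneg (div_nonneg (by linarith) hba.le) (by linarith)
    · rw [max_eq_left h.le]
      rw [div_mul_eq_mul_div, le_div_iff₀ hba]
      nlinarith
  have hcomp : ∫ x, ((b - μ) / (b - a)) * (x - a) ∂P = (b - μ) / (b - a) * (μ - a) := by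
    rw [integral_const_mul, integral_sub hid (integrable_const a), hmean, integral_const]
    simp
  rw [hdecomp]
  rw [hcomp] at hmono
  have : 2 * (b - μ) * (μ - a) / (b - a) = 2 * ((b - μ) / (b - a) * (μ - a)) := by
    field_simp
  rw [this]
  linarith
end

section
/- For any random variable D supported on [a,b] with mean μ ∈ (a,b) and mean absolute deviation δ, the probability β = P(D ≥ μ) satisfies δ/(2(b−μ)) ≤ β ≤ 1 − δ/(2(μ−a)). -/
open MeasureTheory

/-- Bounds on `β = P(D ≥ μ)` in terms of the mean, MAD and range:
`δ/(2(b-μ)) ≤ β ≤ 1 - δ/(2(μ-a))`. -/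
theorem stmt_7 (a μ b δ : ℝ) (haμ : a < μ) (hμb : μ < b) (hδ : 0 < δ)
    (P : Measure ℝ) [IsProbabilityMeasure P]
    (hsupp : ∀ᵐ x ∂P, x ∈ Set.Icc a b)
    (hmean : ∫ x, x ∂P = μ)
    (hmad : ∫ x, |x - μ| ∂P = δ) :
    δ / (2 * (b - μ)) ≤ (P {x | μ ≤ x}).toReal ∧
    (P {x | μ ≤ x}).toReal ≤ 1 - δ / (2 * (μ - a)) := by
  set S : Set ℝ := {x | μ ≤ x} with hSdef
  have hSm : MeasurableSet S := measurableSet_le measurable_const measurable_id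
  have hxint : Integrable (fun x => x) P := by
    refine (integrable_const (max |a| |b|)).mono' aestronglyMeasurable_id ?_
    filter_upwards [hsupp] with x hx
    rw [Real.norm_eq_abs]
    exact abs_le_max_abs_abs hx.1 hx.2
  have hfint : Integrable (fun x : ℝ => x - μ) P := hxint.sub (integrable_const μ)
  have hint0 : ∫ x, (x - μ) ∂P = 0 := by
    rw [integral_sub hxint (integrable_const μ), hmean, integral_const]
    simp
  have hsplit : (∫ x in S, (x - μ) ∂P) + (∫ x in Sᶜ, (x - μ) ∂P) = 0 := by
    rw [integral_add_compl hSm hfint, hint0]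
  have h1 : ∫ x in S, |x - μ| ∂P = ∫ x in S, (x - μ) ∂P := by
    refine setIntegral_congr_fun hSm fun x hx => ?_
    exact abs_of_nonneg (sub_nonneg.2 hx)
  have h2 : ∫ x in Sᶜ, |x - μ| ∂P = ∫ x in Sᶜ, -(x - μ) ∂P := by
    refine setIntegral_congr_fun hSm.compl fun x hx => ?_
    exact abs_of_nonpos (sub_nonpos.2 (le_of_lt (not_le.1 hx)))
  have habs : (∫ x in S, (x - μ) ∂P) - (∫ x in Sᶜ, (x - μ) ∂P) = δ := by
    have h3 : (∫ x in S, |x - μ| ∂P) + (∫ x in Sᶜ, |x - μ| ∂P) = δ := by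
      rw [integral_add_compl hSm hfint.abs, hmad]
    rw [h1, h2, integral_neg] at h3
    linarith
  have hIp : ∫ x in S, (x - μ) ∂P = δ / 2 := by linarith
  have hIn : ∫ x in Sᶜ, -(x - μ) ∂P = δ / 2 := by rw [integral_neg]; linarith
  have hβub : δ / 2 ≤ (b - μ) * (P S).toReal := by
    rw [← hIp]
    calc ∫ x in S, (x - μ) ∂P ≤ ∫ x in S, (b - μ) ∂P := by
          refine integral_mono_ae hfint.restrict (integrable_const _) ?_
          filter_upwards [ae_restrict_of_ae hsupp] with x hx
          linarith [hx.2]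
      _ = (b - μ) * (P S).toReal := by
          rw [setIntegral_const, smul_eq_mul, mul_comm, measureReal_def]
  have hβcb : δ / 2 ≤ (μ - a) * (P Sᶜ).toReal := by
    rw [← hIn]
    calc ∫ x in Sᶜ, -(x - μ) ∂P ≤ ∫ x in Sᶜ, (μ - a) ∂P := by
          refine integral_mono_ae hfint.restrict.neg (integrable_const _) ?_
          filter_upwards [ae_restrict_of_ae hsupp] with x hx
          simp only [neg_sub]
          linarith [hx.1]
      _ = (μ - a) * (P Sᶜ).toReal := by
          rw [setIntegral_const, smul_eq_mul, mul_comm, measureReal_def]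
  have hsum : (P S).toReal + (P Sᶜ).toReal = 1 := by
    rw [← ENNReal.toReal_add (measure_ne_top _ _) (measure_ne_top _ _),
      measure_add_measure_compl hSm]
    simp
  constructor
  · rw [div_le_iff₀ (by linarith : (0:ℝ) < 2 * (b - μ))]
    nlinarith
  · have : δ / (2 * (μ - a)) ≤ (P Sᶜ).toReal := by
      rw [div_le_iff₀ (by linarith : (0:ℝ) < 2 * (μ - a))]
      nlinarith
    linarith
end

section
/- The worst-case cost function C^U(q) equals the pointwise maximum of three affine functions f₀(q) = m(μ−q), f₁(q) = q(δ(m+d)/(2(μ−a)) − m) + ν₁, and f₂(q) = q(d − δ(m+d)/(2(b−μ))) + ν₂ on [0,b], for appropriate constants ν₁, ν₂, and in particular C^U is convex and piecewise linear with at most three pieces (on [0,a), [a,μ), [μ,b]). -/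
set_option maxHeartbeats 1000000

lemma affine_cvx (c e : ℝ) (s : Set ℝ) (hs : Convex ℝ s) :
    ConvexOn ℝ s (fun q => c * q + e) := by
  refine ⟨hs, fun x _ y _ p q hp hq hpq => le_of_eq ?_⟩
  simp only [smul_eq_mul]
  linear_combination (-e) * hpq

/-- The worst-case cost `C^U` is the pointwise maximum of three affine functions on
`[0,b]`; in particular it is convex and piecewise linear with at most three pieces. -/
theorem stmt_9 (a μ b m d δ ν₁ ν₂ : ℝ) (ha : 0 ≤ a) (haμ : a < μ) (hμb : μ < b)
    (hm : 0 < m) (hd : 0 < d) (hδ : 0 < δ)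
    (hδub : δ ≤ 2 * (b - μ) * (μ - a) / (b - a))
    (hν₁ : ν₁ = (m + d) * (μ - δ * a / (2 * (μ - a))) - d * μ)
    (hν₂ : ν₂ = δ * (m + d) * b / (2 * (b - μ)) - d * μ) :
    (∀ q ∈ Set.Icc (0 : ℝ) b,
      d * (q - μ) + (m + d) *
        ((δ / (2 * (μ - a))) * max (a - q) 0 +
         (1 - δ / (2 * (μ - a)) - δ / (2 * (b - μ))) * max (μ - q) 0 +
         (δ / (2 * (b - μ))) * max (b - q) 0)
      = max (max (m * (μ - q)) (q * (δ * (m + d) / (2 * (μ - a)) - m) + ν₁))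
            (q * (d - δ * (m + d) / (2 * (b - μ))) + ν₂)) ∧
    ConvexOn ℝ (Set.Icc (0 : ℝ) b) (fun q =>
      d * (q - μ) + (m + d) *
        ((δ / (2 * (μ - a))) * max (a - q) 0 +
         (1 - δ / (2 * (μ - a)) - δ / (2 * (b - μ))) * max (μ - q) 0 +
         (δ / (2 * (b - μ))) * max (b - q) 0)) := by
  have hu : (0:ℝ) < μ - a := by linarith
  have hv : (0:ℝ) < b - μ := by linarith
  have hba : (0:ℝ) < b - a := by linarith
  set x := δ / (2 * (μ - a)) with hxdef
  set y := δ / (2 * (b - μ)) with hydef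
  clear_value x
  have hx : x * (2 * (μ - a)) = δ := by rw [hxdef]; field_simp
  clear_value y
  have hy : y * (2 * (b - μ)) = δ := by rw [hydef]; field_simp
  have hx0 : 0 < x := by rw [hxdef]; positivity
  have hy0 : 0 < y := by rw [hydef]; positivity
  have hδba : δ * (b - a) ≤ 2 * (b - μ) * (μ - a) := by
    have := (le_div_iff₀ hba).mp hδub
    linarith
  have hxy : x + y ≤ 1 := by
    nlinarith [mul_pos hu hv, hx, hy]
  have hν₁' : ν₁ = (m + d) * (μ - x * a) - d * μ := by
    rw [hν₁, hxdef]; ring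
  have hν₂' : ν₂ = y * (m + d) * b - d * μ := by
    rw [hν₂, hydef]; ring
  have e1 : δ * (m + d) / (2 * (μ - a)) = x * (m + d) := by rw [hxdef]; ring
  have e2 : δ * (m + d) / (2 * (b - μ)) = y * (m + d) := by rw [hydef]; ring
  have key : ∀ q ∈ Set.Icc (0 : ℝ) b,
      d * (q - μ) + (m + d) *
        (x * max (a - q) 0 + (1 - x - y) * max (μ - q) 0 + y * max (b - q) 0)
      = max (max (m * (μ - q)) (q * (x * (m + d) - m) + ν₁))
            (q * (d - y * (m + d)) + ν₂) := by
    rintro q ⟨hq0, hqb⟩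
    rw [max_eq_left (by linarith : (0:ℝ) ≤ b - q), hν₁', hν₂']
    rcases le_or_gt q a with hqa | hqa
    · -- q ≤ a : value is f₀ = m(μ-q)
      rw [max_eq_left (by linarith : (0:ℝ) ≤ a - q),
          max_eq_left (by linarith : (0:ℝ) ≤ μ - q)]
      have h01 : q * (x * (m + d) - m) + ((m + d) * (μ - x * a) - d * μ)
          ≤ m * (μ - q) := by nlinarith [mul_nonneg (le_of_lt hx0) (sub_nonneg.mpr hqa)]
      have hyba : y * (b - a) ≤ μ - a := by nlinarith [hδba, hy, hv]
      have hky : y * (b - q) ≤ μ - q := by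
        nlinarith [hyba, mul_nonneg (by linarith : (0:ℝ) ≤ 1 - y) (by linarith : (0:ℝ) ≤ a - q)]
      have h02 : q * (d - y * (m + d)) + (y * (m + d) * b - d * μ) ≤ m * (μ - q) := by
        nlinarith [mul_le_mul_of_nonneg_left hky (by linarith : (0:ℝ) ≤ m + d)]
      rw [max_eq_left h01, max_eq_left h02]
      linear_combination ((m + d) / 2) * hy - ((m + d) / 2) * hx
    · rcases le_or_gt q μ with hqμ | hqμ
      · -- a < q ≤ μ : value is f₁
        rw [max_eq_right (by linarith : a - q ≤ 0),
            max_eq_left (by linarith : (0:ℝ) ≤ μ - q)]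
        have h10 : m * (μ - q) ≤ q * (x * (m + d) - m) + ((m + d) * (μ - x * a) - d * μ) := by
          nlinarith [mul_nonneg (le_of_lt hx0) (by linarith : (0:ℝ) ≤ q - a)]
        have h12 : q * (d - y * (m + d)) + (y * (m + d) * b - d * μ)
            ≤ q * (x * (m + d) - m) + ((m + d) * (μ - x * a) - d * μ) := by
          nlinarith [mul_nonneg (mul_nonneg (by linarith : (0:ℝ) ≤ 1 - x - y)
            (by linarith : (0:ℝ) ≤ m + d)) (sub_nonneg.mpr hqμ), hx, hy]
        rw [max_eq_right h10, max_eq_left h12]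
        linear_combination ((m + d) / 2) * hy - ((m + d) / 2) * hx
      · -- μ < q ≤ b : value is f₂
        rw [max_eq_right (by linarith : a - q ≤ 0),
            max_eq_right (by linarith : μ - q ≤ 0)]
        have h20 : m * (μ - q) ≤ q * (d - y * (m + d)) + (y * (m + d) * b - d * μ) := by
          nlinarith [mul_nonneg (mul_nonneg (le_of_lt hy0)
            (by linarith : (0:ℝ) ≤ m + d)) (by linarith : (0:ℝ) ≤ b - q)]
        have h21 : q * (x * (m + d) - m) + ((m + d) * (μ - x * a) - d * μ)
            ≤ q * (d - y * (m + d)) + (y * (m + d) * b - d * μ) := by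
          nlinarith [mul_nonneg (mul_nonneg (by linarith : (0:ℝ) ≤ 1 - x - y)
            (by linarith : (0:ℝ) ≤ m + d)) (by linarith : (0:ℝ) ≤ q - μ), hx, hy]
        rw [max_le_iff.mpr ⟨h20, h21⟩ |> max_eq_right]
        ring
  constructor
  · intro q hq
    rw [e1, e2, ← key q hq]
  · have hG : ConvexOn ℝ (Set.Icc (0 : ℝ) b)
        (fun q => max (max (m * (μ - q)) (q * (x * (m + d) - m) + ν₁))
            (q * (d - y * (m + d)) + ν₂)) := by
      have c0 : ConvexOn ℝ (Set.Icc (0 : ℝ) b) (fun q : ℝ => m * (μ - q)) := by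
        have := affine_cvx (-m) (m * μ) (Set.Icc (0:ℝ) b) (convex_Icc _ _)
        exact this.congr (fun q _ => by ring)
      have c1 : ConvexOn ℝ (Set.Icc (0 : ℝ) b)
          (fun q : ℝ => q * (x * (m + d) - m) + ν₁) := by
        have := affine_cvx (x * (m + d) - m) ν₁ (Set.Icc (0:ℝ) b) (convex_Icc _ _)
        exact this.congr (fun q _ => by ring)
      have c2 : ConvexOn ℝ (Set.Icc (0 : ℝ) b)
          (fun q : ℝ => q * (d - y * (m + d)) + ν₂) := by
        have := affine_cvx (d - y * (m + d)) ν₂ (Set.Icc (0:ℝ) b) (convex_Icc _ _)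
        exact this.congr (fun q _ => by ring)
      exact (c0.sup c1).sup c2
    exact hG.congr fun q hq => (key q hq).symm
end

section
/- If m < δd/(2(μ−a)−δ), then q = a minimizes C^U(q) over q ≥ 0. -/
/-- If `m < δd/(2(μ-a)-δ)`, then `q = a` minimizes the worst-case cost `C^U` over `q ≥ 0`. -/
theorem stmt_11 (a μ b m d δ : ℝ) (ha : 0 ≤ a) (haμ : a < μ) (hμb : μ < b)
    (hm : 0 < m) (hd : 0 < d) (hδ : 0 < δ) (hδ2 : δ < 2 * (μ - a))
    (hδub : δ ≤ 2 * (b - μ) * (μ - a) / (b - a))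
    (hcond : m < δ * d / (2 * (μ - a) - δ)) :
    ∀ q : ℝ, 0 ≤ q →
      d * (a - μ) + (m + d) *
        ((δ / (2 * (μ - a))) * max (a - a) 0 +
         (1 - δ / (2 * (μ - a)) - δ / (2 * (b - μ))) * max (μ - a) 0 +
         (δ / (2 * (b - μ))) * max (b - a) 0)
      ≤ d * (q - μ) + (m + d) *
        ((δ / (2 * (μ - a))) * max (a - q) 0 +
         (1 - δ / (2 * (μ - a)) - δ / (2 * (b - μ))) * max (μ - q) 0 +
         (δ / (2 * (b - μ))) * max (b - q) 0) := by
  intro q hq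
  have hA : (0:ℝ) < μ - a := by linarith
  have hB : (0:ℝ) < b - μ := by linarith
  have hab : (0:ℝ) < b - a := by linarith
  have h2A : (0:ℝ) < 2 * (μ - a) := by linarith
  have h2B : (0:ℝ) < 2 * (b - μ) := by linarith
  have hδ2A : (0:ℝ) < 2 * (μ - a) - δ := by linarith
  have hcond' : m * (2 * (μ - a) - δ) < δ * d := by
    rw [lt_div_iff₀ hδ2A] at hcond; linarith
  have hδub' : δ * (b - a) ≤ 2 * (b - μ) * (μ - a) := by
    rw [le_div_iff₀ hab] at hδub; linarith
  set pa : ℝ := δ / (2 * (μ - a)) with hpa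
  set pb : ℝ := δ / (2 * (b - μ)) with hpb
  have hpa0 : 0 < pa := div_pos hδ h2A
  have hpb0 : 0 < pb := div_pos hδ h2B
  have key1 : m < (m + d) * pa := by
    rw [hpa, mul_div_assoc', lt_div_iff₀ h2A]
    nlinarith
  have key2 : (m + d) * pb ≤ d := by
    rw [hpb, mul_div_assoc', div_le_iff₀ h2B]
    nlinarith [mul_le_mul_of_nonneg_left hδub' hd.le,
      mul_lt_mul_of_pos_left hcond' hδ]
  rcases le_total q a with hqa | hqa
  · rw [max_eq_left (by linarith : (0:ℝ) ≤ a - q),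
      max_eq_left (by linarith : (0:ℝ) ≤ μ - q),
      max_eq_left (by linarith : (0:ℝ) ≤ b - q),
      max_eq_right (by linarith : a - a ≤ 0),
      max_eq_left (by linarith : (0:ℝ) ≤ μ - a),
      max_eq_left (by linarith : (0:ℝ) ≤ b - a)]
    linarith [mul_nonneg hm.le (by linarith : (0:ℝ) ≤ a - q)]
  · rw [max_eq_right (by linarith : a - q ≤ 0),
      max_eq_right (by linarith : a - a ≤ 0),
      max_eq_left (by linarith : (0:ℝ) ≤ μ - a),
      max_eq_left (by linarith : (0:ℝ) ≤ b - a)]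
    rcases le_total q μ with hqμ | hqμ
    · rw [max_eq_left (by linarith : (0:ℝ) ≤ μ - q),
        max_eq_left (by linarith : (0:ℝ) ≤ b - q)]
      linarith [mul_nonneg (by linarith : (0:ℝ) ≤ q - a) (by linarith : (0:ℝ) ≤ (m+d)*pa - m)]
    · rw [max_eq_right (by linarith : μ - q ≤ 0)]
      rcases le_total q b with hqb | hqb
      · rw [max_eq_left (by linarith : (0:ℝ) ≤ b - q)]
        linarith [mul_nonneg hA.le (by linarith : (0:ℝ) ≤ (m+d)*pa - m),
          mul_nonneg (by linarith : (0:ℝ) ≤ q - μ) (by linarith : (0:ℝ) ≤ d - (m+d)*pb)]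
      · rw [max_eq_right (by linarith : b - q ≤ 0)]
        linarith [mul_nonneg hA.le (by linarith : (0:ℝ) ≤ (m+d)*pa - m),
          mul_nonneg hB.le (by linarith : (0:ℝ) ≤ d - (m+d)*pb),
          mul_nonneg hd.le (by linarith : (0:ℝ) ≤ q - b)]
end

section
/- If δd/(2(μ−a)−δ) < m < d(2(b−μ)−δ)/δ, then q = μ minimizes C^U(q) over q ≥ 0. -/
/-- If `δd/(2(μ-a)-δ) < m < d(2(b-μ)-δ)/δ`, then `q = μ` minimizes `C^U` over `q ≥ 0`. -/
theorem stmt_12 (a μ b m d δ : ℝ) (ha : 0 ≤ a) (haμ : a < μ) (hμb : μ < b)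
    (hm : 0 < m) (hd : 0 < d) (hδ : 0 < δ) (hδ2 : δ < 2 * (μ - a))
    (hδub : δ ≤ 2 * (b - μ) * (μ - a) / (b - a))
    (hcond1 : δ * d / (2 * (μ - a) - δ) < m)
    (hcond2 : m < d * (2 * (b - μ) - δ) / δ) :
    ∀ q : ℝ, 0 ≤ q →
      d * (μ - μ) + (m + d) *
        ((δ / (2 * (μ - a))) * max (a - μ) 0 +
         (1 - δ / (2 * (μ - a)) - δ / (2 * (b - μ))) * max (μ - μ) 0 +
         (δ / (2 * (b - μ))) * max (b - μ) 0)
      ≤ d * (q - μ) + (m + d) *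
        ((δ / (2 * (μ - a))) * max (a - q) 0 +
         (1 - δ / (2 * (μ - a)) - δ / (2 * (b - μ))) * max (μ - q) 0 +
         (δ / (2 * (b - μ))) * max (b - q) 0) := by
  intro q hq
  have hμa : (0:ℝ) < μ - a := by linarith
  have hbμ : (0:ℝ) < b - μ := by linarith
  have hba : (0:ℝ) < b - a := by linarith
  have h1 : δ * d < m * (2 * (μ - a) - δ) := by
    rw [div_lt_iff₀ (by linarith)] at hcond1; linarith
  have h2 : m * δ < d * (2 * (b - μ) - δ) := by
    rw [lt_div_iff₀ hδ] at hcond2; linarith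
  have h3 : δ * (b - a) ≤ 2 * (b - μ) * (μ - a) := by
    rw [le_div_iff₀ hba] at hδub; linarith
  have e1 : max (a - μ) 0 = 0 := max_eq_right (by linarith)
  have e2 : max (μ - μ) 0 = 0 := by simp
  have e3 : max (b - μ) 0 = b - μ := max_eq_left (by linarith)
  rw [e1, e2, e3]
  set pa := δ / (2 * (μ - a)) with hpa_def
  set pb := δ / (2 * (b - μ)) with hpb_def
  have hpa : (m + d) * pa < m := by
    rw [hpa_def, ← mul_div_assoc, div_lt_iff₀ (by positivity)]
    nlinarith
  have hpb : (m + d) * pb < d := by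
    rw [hpb_def, ← mul_div_assoc, div_lt_iff₀ (by positivity)]
    nlinarith
  have hpa0 : 0 < pa := by positivity
  have hpb0 : 0 < pb := by positivity
  have hsum : pa + pb ≤ 1 := by
    rw [hpa_def, hpb_def, div_add_div _ _ (by positivity) (by positivity),
      div_le_one (by positivity)]
    nlinarith
  clear_value pa pb
  clear hpa_def hpb_def hδub hcond1 hcond2 h1 h2 h3 e1 e2 e3 hδ2 hδ
  rcases le_total q a with hqa | hqa
  · rw [max_eq_left (by linarith : (0:ℝ) ≤ a - q),
      max_eq_left (by linarith : (0:ℝ) ≤ μ - q),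
      max_eq_left (by linarith : (0:ℝ) ≤ b - q)]
    nlinarith [mul_nonneg (sub_nonneg.mpr hqa) hm.le,
      mul_nonneg hμa.le (by linarith : (0:ℝ) ≤ m - (m + d) * pa),
      mul_nonneg (sub_nonneg.mpr hqa) (by nlinarith : (0:ℝ) ≤ (m+d)*pa),
      mul_nonneg (sub_nonneg.mpr hqa) (by nlinarith : (0:ℝ) ≤ (m+d)*pb)]
  · rcases le_total q μ with hqμ | hqμ
    · rw [max_eq_right (by linarith : a - q ≤ 0),
        max_eq_left (by linarith : (0:ℝ) ≤ μ - q),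
        max_eq_left (by linarith : (0:ℝ) ≤ b - q)]
      nlinarith [mul_nonneg (by linarith : (0:ℝ) ≤ μ - q)
        (by nlinarith : (0:ℝ) ≤ (m + d) * (1 - pa) - d)]
    · rcases le_total q b with hqb | hqb
      · rw [max_eq_right (by linarith : a - q ≤ 0),
          max_eq_right (by linarith : μ - q ≤ 0),
          max_eq_left (by linarith : (0:ℝ) ≤ b - q)]
        nlinarith [mul_nonneg (by linarith : (0:ℝ) ≤ q - μ)
          (by linarith : (0:ℝ) ≤ d - (m + d) * pb)]
      · rw [max_eq_right (by linarith : a - q ≤ 0),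
          max_eq_right (by linarith : μ - q ≤ 0),
          max_eq_right (by linarith : b - q ≤ 0)]
        nlinarith [mul_nonneg (by linarith : (0:ℝ) ≤ b - μ)
          (by linarith : (0:ℝ) ≤ d - (m + d) * pb)]
end

section
/- If m > d(2(b−μ)−δ)/δ, then q = b minimizes C^U(q) over q ≥ 0. -/
/-- If `m > d(2(b-μ)-δ)/δ`, then `q = b` minimizes `C^U` over `q ≥ 0`. -/
theorem stmt_13 (a μ b m d δ : ℝ) (ha : 0 ≤ a) (haμ : a < μ) (hμb : μ < b)
    (hm : 0 < m) (hd : 0 < d) (hδ : 0 < δ)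
    (hδub : δ ≤ 2 * (b - μ) * (μ - a) / (b - a))
    (hcond : d * (2 * (b - μ) - δ) / δ < m) :
    ∀ q : ℝ, 0 ≤ q →
      d * (b - μ) + (m + d) *
        ((δ / (2 * (μ - a))) * max (a - b) 0 +
         (1 - δ / (2 * (μ - a)) - δ / (2 * (b - μ))) * max (μ - b) 0 +
         (δ / (2 * (b - μ))) * max (b - b) 0)
      ≤ d * (q - μ) + (m + d) *
        ((δ / (2 * (μ - a))) * max (a - q) 0 +
         (1 - δ / (2 * (μ - a)) - δ / (2 * (b - μ))) * max (μ - q) 0 +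
         (δ / (2 * (b - μ))) * max (b - q) 0) := by
  intro q hq
  have hA : 0 < μ - a := by linarith
  have hB : 0 < b - μ := by linarith
  have hab : 0 < b - a := by linarith
  -- LHS maxes are all zero
  rw [max_eq_right (by linarith : a - b ≤ 0), max_eq_right (by linarith : μ - b ≤ 0),
    max_eq_right (by linarith : b - b ≤ 0)]
  -- nonnegativity of probabilities
  have hpa : 0 ≤ δ / (2 * (μ - a)) := by positivity
  have hδab : δ * (b - a) ≤ 2 * (b - μ) * (μ - a) := (le_div_iff₀ hab).mp hδub
  have hsum : δ / (2 * (μ - a)) + δ / (2 * (b - μ)) ≤ 1 := by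
    rw [div_add_div _ _ (by positivity) (by positivity), div_le_one (by positivity)]
    nlinarith
  have hpμ : 0 ≤ 1 - δ / (2 * (μ - a)) - δ / (2 * (b - μ)) := by linarith
  -- (m+d) * p_b ≥ d
  have hcond' : d * (2 * (b - μ) - δ) < m * δ := (div_lt_iff₀ hδ).mp hcond
  have hpb : d ≤ (m + d) * (δ / (2 * (b - μ))) := by
    rw [mul_div_assoc', le_div_iff₀ (by positivity)]
    nlinarith
  set Ma := max (a - q) 0 with hMa
  set Mμ := max (μ - q) 0 with hMμ
  set Mb := max (b - q) 0 with hMb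
  have hMa0 : 0 ≤ Ma := le_max_right _ _
  have hMμ0 : 0 ≤ Mμ := le_max_right _ _
  have hMb0 : 0 ≤ Mb := le_max_right _ _
  have hMbq : b - q ≤ Mb := le_max_left _ _
  have h2 : d * Mb ≤ (m + d) * (δ / (2 * (b - μ))) * Mb :=
    mul_le_mul_of_nonneg_right hpb hMb0
  have h3 : 0 ≤ (m + d) * (δ / (2 * (μ - a)) * Ma) :=
    mul_nonneg (by linarith) (mul_nonneg hpa hMa0)
  have h4 : 0 ≤ (m + d) * ((1 - δ / (2 * (μ - a)) - δ / (2 * (b - μ))) * Mμ) :=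
    mul_nonneg (by linarith) (mul_nonneg hpμ hMμ0)
  have h5 : d * (b - q) ≤ d * Mb := mul_le_mul_of_nonneg_left hMbq hd.le
  nlinarith [h2, h3, h4, h5]
end

section
/- The mean-MAD worst-case bound is tight at q = a, q = μ, and q = b: for any distribution P in the ambiguity set, C^U(q) = C_P(q) at q ∈ {a, μ, b} where C_P(q) = d(q−μ) + (m+d)E_P[(D−q)^+], provided the support of D is exactly within [a,b] with the given mean and MAD. In particular C^U(μ) = δ(m+d)/2 + 0 = C_P(μ). -/
open MeasureTheory

/-- Tightness of the mean-MAD upper bound at `q ∈ {a, μ, b}`: for any distribution in the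
ambiguity set, `C^U(q) = C_P(q)` there, and in particular `C^U(μ) = C_P(μ) = δ(m+d)/2`. -/
theorem stmt_14 (a μ b m d δ : ℝ) (ha : 0 ≤ a) (haμ : a < μ) (hμb : μ < b)
    (hm : 0 < m) (hd : 0 < d) (hδ : 0 < δ)
    (P : Measure ℝ) [IsProbabilityMeasure P]
    (hsupp : ∀ᵐ x ∂P, x ∈ Set.Icc a b)
    (hmean : ∫ x, x ∂P = μ)
    (hmad : ∫ x, |x - μ| ∂P = δ) :
    (∀ q ∈ ({a, μ, b} : Set ℝ),
      d * (q - μ) + (m + d) *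
        ((δ / (2 * (μ - a))) * max (a - q) 0 +
         (1 - δ / (2 * (μ - a)) - δ / (2 * (b - μ))) * max (μ - q) 0 +
         (δ / (2 * (b - μ))) * max (b - q) 0)
      = d * (q - μ) + (m + d) * ∫ x, max (x - q) 0 ∂P) ∧
    d * (μ - μ) + (m + d) * ∫ x, max (x - μ) 0 ∂P = δ * (m + d) / 2 := by
  have hne1 : μ - a ≠ 0 := by linarith
  have hne2 : b - μ ≠ 0 := by linarith
  have hx : Integrable (fun x : ℝ => x) P := by
    apply Integrable.mono' (integrable_const b) measurable_id.aestronglyMeasurable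
    filter_upwards [hsupp] with x hx
    simp only [Real.norm_eq_abs, id]
    rw [abs_le]
    constructor <;> linarith [hx.1, hx.2]
  have hsub : Integrable (fun x : ℝ => x - μ) P := hx.sub (integrable_const μ)
  have habs : Integrable (fun x : ℝ => |x - μ|) P := hsub.abs
  have hIa : ∫ x, max (x - a) 0 ∂P = μ - a := by
    have h1 : ∫ x, max (x - a) 0 ∂P = ∫ x, x - a ∂P := by
      apply integral_congr_ae
      filter_upwards [hsupp] with x hx
      exact max_eq_left (by linarith [hx.1])
    rw [h1, integral_sub hx (integrable_const a), hmean, integral_const]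
    simp
  have hIb : ∫ x, max (x - b) 0 ∂P = 0 := by
    have h1 : ∫ x, max (x - b) 0 ∂P = ∫ _x, (0 : ℝ) ∂P := by
      apply integral_congr_ae
      filter_upwards [hsupp] with x hx
      exact max_eq_right (by linarith [hx.2])
    rw [h1, integral_zero]
  have hIμ : ∫ x, max (x - μ) 0 ∂P = δ / 2 := by
    have h1 : ∫ x, max (x - μ) 0 ∂P = ∫ x, ((x - μ) + |x - μ|) / 2 ∂P := by
      apply integral_congr_ae
      filter_upwards with x
      rcases le_total (x - μ) 0 with h | h
      · rw [max_eq_right h, abs_of_nonpos h]; ring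
      · rw [max_eq_left h, abs_of_nonneg h]; ring
    rw [h1, integral_div, integral_add hsub habs,
      integral_sub hx (integrable_const μ), hmean, hmad, integral_const]
    simp
  constructor
  · intro q hq
    simp only [Set.mem_insert_iff, Set.mem_singleton_iff] at hq
    rcases hq with hq | hq | hq <;> rw [hq]
    · rw [hIa, sub_self, max_eq_right le_rfl,
        max_eq_left (by linarith : (0:ℝ) ≤ μ - a),
        max_eq_left (by linarith : (0:ℝ) ≤ b - a)]
      congr 1
      field_simp
      ring
    · rw [hIμ, max_eq_right (by linarith : a - μ ≤ 0), sub_self, max_eq_right le_rfl,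
        max_eq_left (by linarith : (0:ℝ) ≤ b - μ)]
      congr 1
      field_simp
      ring
    · rw [hIb, max_eq_right (by linarith : a - b ≤ 0),
        max_eq_right (by linarith : μ - b ≤ 0), sub_self, max_eq_right le_rfl]
      ring
  · rw [hIμ]; ring
end
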